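/- Let (Ω, 𝓕, μ) be a probability space, X, Y : Ω → ℝ and Z : Ω → ℝ^d Borel measurable, with F_{X|Z}(t|z) = (condDistrib X Z μ) z ((−∞, t]) and U₁(ω) = F_{X|Z}(X(ω)|Z(ω)). Assume that for (law of Z)-almost every z the conditional law of X given Z = z is atomless, and that X and Y are conditionally independent given Z. Let φ : [0,1] → ℝ be bounded measurable with ∫₀¹ φ(u) du = 0. Then for every bounded measurable g : ℝ × ℝ^d → ℝ, E[φ(U₁)·g(Y, Z)] = 0; equivalently, the conditional expectation of φ(U₁) given the σ-algebra generated by (Y, Z) is 0 almost surely. -/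

import Mathlib

/-! Conditional independence makes the joint law of `(Z, X, Y)` the mixture over `z ∼ law(Z)` of
`δ_z ⊗ κ_X(z) ⊗ κ_Y(z)`, where `κ_X`, `κ_Y` are the conditional laws given `Z`. Hence
`E[φ(U₁) g(Y, Z)] = ∫ (∫ φ(F(x|z)) dκ_X(z)(x)) (∫ g(y, z) dκ_Y(z)(y)) dlaw(Z)(z)`.
When `κ_X(z)` is atomless its distribution function is continuous, so it pushes `κ_X(z)` forward
to the uniform law on `[0, 1]` (probability integral transform) and the inner integral is
`∫₀¹ φ = 0`. Taking for `g` the indicators of measurable sets gives the statement about the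
conditional expectation. -/

open MeasureTheory ProbabilityTheory Set Filter

namespace MeasureTheory

lemma condExp_comap_ae_eq_zero {Ω β : Type*} {mΩ : MeasurableSpace Ω} [MeasurableSpace β]
    {μ : Measure Ω} [IsFiniteMeasure μ] {W : Ω → β} (hW : Measurable W) {f : Ω → ℝ}
    (hf : Integrable f μ)
    (h : ∀ g : β → ℝ, Measurable g → (∃ C, ∀ b, |g b| ≤ C) → ∫ ω, f ω * g (W ω) ∂μ = 0) :
    μ[f | MeasurableSpace.comap W inferInstance] =ᵐ[μ] 0 := by
  refine (ae_eq_condExp_of_forall_setIntegral_eq hW.comap_le hf (fun _ _ _ ↦ integrableOn_zero) ?_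
    aestronglyMeasurable_zero).symm
  rintro - ⟨s, hs, rfl⟩ -
  have hs_bdd : ∀ b, |s.indicator (1 : β → ℝ) b| ≤ 1 := fun b ↦ by
    by_cases hb : b ∈ s <;> simp [hb]
  rw [integral_zero, ← integral_indicator (hW hs), ← h _ (measurable_one.indicator hs) ⟨1, hs_bdd⟩]
  congr with ω
  by_cases hω : W ω ∈ s <;> simp [hω]

end MeasureTheory

namespace ProbabilityTheory

variable {ν : Measure ℝ} [IsProbabilityMeasure ν]

lemma continuous_cdf [NullSingletonClass ν] : Continuous (cdf ν) := by
  refine continuous_iff_continuousAt.2 fun x ↦ continuousAt_iff_continuous_left_right.2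
    ⟨?_, (cdf ν).right_continuous x⟩
  have hleft : Function.leftLim (cdf ν) x = cdf ν x := by
    have h := (cdf ν).measure_singleton x
    rw [measure_cdf, measure_singleton, eq_comm, ENNReal.ofReal_eq_zero, sub_nonpos] at h
    exact le_antisymm ((cdf ν).mono.leftLim_le le_rfl) h
  exact continuousWithinAt_Iio_iff_Iic.1
    ((cdf ν).mono.continuousWithinAt_Iio_iff_leftLim_eq.2 hleft)

/-- `{x | cdf ν x ≤ t}` is closed and down-closed, hence an `Iic c`, and the intermediate value
theorem forces `cdf ν c = t`. -/
lemma measure_setOf_cdf_le [NullSingletonClass ν] {t : ℝ} (ht₀ : 0 ≤ t) (ht₁ : t < 1) :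
    ν {x | cdf ν x ≤ t} = ENNReal.ofReal t := by
  set S := {x | cdf ν x ≤ t}
  obtain ⟨b, hb⟩ := eventually_atTop.1 ((tendsto_cdf_atTop (μ := ν)).eventually (lt_mem_nhds ht₁))
  have hbdd : BddAbove S := ⟨b, fun x hx ↦ not_lt.1 fun hbx ↦ (hb x hbx.le).not_ge hx⟩
  rcases S.eq_empty_or_nonempty with hS | hS
  · obtain rfl : t = 0 := by
      refine le_antisymm (not_lt.1 fun ht ↦ ?_) ht₀
      obtain ⟨x, hx⟩ := ((tendsto_cdf_atBot (μ := ν)).eventually (gt_mem_nhds ht)).exists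
      exact hS.subset (show x ∈ S from hx.le)
    simp [hS]
  set c := sSup S
  have hc : c ∈ S := (isClosed_le continuous_cdf continuous_const).csSup_mem hS hbdd
  have hcb : c ≤ b := csSup_le hS fun x hx ↦ not_lt.1 fun hbx ↦ (hb x hbx.le).not_ge hx
  obtain ⟨x, ⟨hcx, -⟩, hx⟩ := intermediate_value_Icc hcb continuous_cdf.continuousOn
    ⟨hc, (hb b le_rfl).le⟩
  have hxc : x = c := le_antisymm (le_csSup hbdd hx.le) hcx
  have hSc : S = Iic c :=
    Set.ext fun y ↦ ⟨fun hy ↦ le_csSup hbdd hy, fun hy ↦ (monotone_cdf ν hy).trans hc⟩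
  rw [hSc, ← ofReal_cdf, ← hxc, hx]

lemma map_cdf [NullSingletonClass ν] : ν.map (cdf ν) = volume.restrict (Icc 0 1) := by
  refine Measure.ext_of_Iic _ _ fun t ↦ ?_
  rw [Measure.map_apply continuous_cdf.measurable measurableSet_Iic,
    Measure.restrict_apply measurableSet_Iic]
  rcases lt_or_ge t 0 with ht₀ | ht₀
  · have hF : cdf ν ⁻¹' Iic t = ∅ :=
      eq_empty_of_forall_notMem fun x hx ↦ (ht₀.trans_le (cdf_nonneg ν x)).not_ge hx
    have hI : Iic t ∩ Icc (0 : ℝ) 1 = ∅ :=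
      eq_empty_of_forall_notMem fun x ⟨hxt, hx0, _⟩ ↦ (ht₀.trans_le hx0).not_ge hxt
    rw [hF, hI, measure_empty, measure_empty]
  rcases lt_or_ge t 1 with ht₁ | ht₁
  · have hI : Iic t ∩ Icc (0 : ℝ) 1 = Icc 0 t := by
      ext x
      simp only [mem_inter_iff, mem_Iic, mem_Icc]
      constructor
      · rintro ⟨hxt, hx0, -⟩
        exact ⟨hx0, hxt⟩
      · rintro ⟨hx0, hxt⟩
        exact ⟨hxt, hx0, hxt.trans ht₁.le⟩
    rw [hI, Real.volume_Icc, sub_zero]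
    exact measure_setOf_cdf_le ht₀ ht₁
  · have hF : cdf ν ⁻¹' Iic t = univ :=
      eq_univ_of_forall fun x ↦ (cdf_le_one ν x).trans ht₁
    rw [hF, inter_eq_right.2 (Icc_subset_Iic_self.trans (Iic_subset_Iic.2 ht₁)), measure_univ,
      Real.volume_Icc, sub_zero, ENNReal.ofReal_one]

lemma integral_comp_cdf [NullSingletonClass ν] {φ : ℝ → ℝ} (hφ : Measurable φ) :
    ∫ x, φ (cdf ν x) ∂ν = ∫ u in Icc 0 1, φ u := by
  rw [← map_cdf (ν := ν), integral_map continuous_cdf.aemeasurable hφ.aestronglyMeasurable]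

lemma Kernel.measurable_cdf {α : Type*} [MeasurableSpace α] (κ : Kernel α ℝ) [IsMarkovKernel κ] :
    Measurable fun p : α × ℝ ↦ cdf (κ p.1) p.2 := by
  simp_rw [cdf_eq_real, measureReal_def]
  have h := Kernel.measurable_kernel_prodMk_left (κ := κ.comap Prod.fst measurable_fst)
    (measurableSet_le measurable_snd measurable_fst.snd)
  exact h.ennreal_toReal

theorem integral_mul_eq_integral_condDistrib_mul {Ω β β' γ : Type*} [MeasurableSpace Ω]
    [StandardBorelSpace Ω] [MeasurableSpace β] [StandardBorelSpace β] [Nonempty β]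
    [MeasurableSpace β'] [StandardBorelSpace β'] [Nonempty β'] [MeasurableSpace γ]
    {μ : Measure Ω} [IsFiniteMeasure μ] {X : Ω → β} {Y : Ω → β'} {Z : Ω → γ}
    (hX : Measurable X) (hY : Measurable Y) (hZ : Measurable Z) (hXY : X ⟂ᵢ[Z, hZ; μ] Y)
    {f : γ → β → ℝ} {g : γ → β' → ℝ}
    (hfg : Integrable (fun p : γ × β × β' ↦ f p.1 p.2.1 * g p.1 p.2.2)
      (μ.map fun ω ↦ (Z ω, X ω, Y ω))) :
    ∫ ω, f (Z ω) (X ω) * g (Z ω) (Y ω) ∂μ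
      = ∫ z, (∫ x, f z x ∂condDistrib X Z μ z) * ∫ y, g z y ∂condDistrib Y Z μ z ∂μ.map Z := by
  rw [← integral_map (hZ.prodMk (hX.prodMk hY)).aemeasurable hfg.aestronglyMeasurable]
  rw [(condIndepFun_iff_map_prod_eq_prod_condDistrib_prod_condDistrib hX hY hZ).1 hXY,
    ← Measure.compProd_eq_comp_prod] at hfg ⊢
  rw [Measure.integral_compProd hfg]
  simp_rw [Kernel.prod_apply, integral_prod_mul]

end ProbabilityTheory

theorem residual_orthogonal_of_condIndep_general {Ω : Type*} [MeasurableSpace Ω]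
    [StandardBorelSpace Ω]
    (μ : Measure Ω) [IsProbabilityMeasure μ] {d : ℕ}
    (X Y : Ω → ℝ) (Z : Ω → Fin d → ℝ)
    (hX : Measurable X) (hY : Measurable Y) (hZ : Measurable Z)
    (hatomless : ∀ᵐ z ∂(μ.map Z), ∀ x : ℝ, (condDistrib X Z μ) z {x} = 0)
    (hCI : CondIndepFun (MeasurableSpace.comap Z inferInstance) hZ.comap_le X Y μ)
    (φ : ℝ → ℝ) (hφmeas : Measurable φ) (hφbdd : ∃ C : ℝ, ∀ u : ℝ, |φ u| ≤ C)
    (hφmean : ∫ u in Set.Icc (0 : ℝ) 1, φ u = 0) :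
    (∀ g : ℝ × (Fin d → ℝ) → ℝ, Measurable g → (∃ C : ℝ, ∀ p, |g p| ≤ C) →
      ∫ ω, φ (((condDistrib X Z μ) (Z ω) (Set.Iic (X ω))).toReal) * g (Y ω, Z ω) ∂μ = 0) ∧
    μ[fun ω => φ (((condDistrib X Z μ) (Z ω) (Set.Iic (X ω))).toReal) |
        MeasurableSpace.comap (fun ω => (Y ω, Z ω)) inferInstance] =ᵐ[μ] 0 := by
  set κ := condDistrib X Z μ
  obtain ⟨Cφ, hCφ⟩ := hφbdd
  have hU (ω : Ω) : (κ (Z ω) (Iic (X ω))).toReal = cdf (κ (Z ω)) (X ω) := (cdf_eq_real _ _).symm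
  have hφU : Measurable fun p : (Fin d → ℝ) × ℝ ↦ φ (cdf (κ p.1) p.2) :=
    hφmeas.comp κ.measurable_cdf
  have hpit : ∀ᵐ z ∂μ.map Z, ∫ x, φ (cdf (κ z) x) ∂κ z = 0 := by
    filter_upwards [hatomless] with z hz
    have : NullSingletonClass (κ z) := ⟨hz⟩
    rw [integral_comp_cdf hφmeas, hφmean]
  have horth (g : ℝ × (Fin d → ℝ) → ℝ) (hg : Measurable g) (hg_bdd : ∃ C : ℝ, ∀ p, |g p| ≤ C) :
      ∫ ω, φ ((κ (Z ω) (Iic (X ω))).toReal) * g (Y ω, Z ω) ∂μ = 0 := by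
    obtain ⟨Cg, hCg⟩ := hg_bdd
    simp_rw [hU]
    rw [integral_mul_eq_integral_condDistrib_mul (f := fun z x ↦ φ (cdf (κ z) x))
      (g := fun z y ↦ g (y, z)) hX hY hZ hCI]
    · refine integral_eq_zero_of_ae ?_
      filter_upwards [hpit] with z hz
      rw [hz, zero_mul, Pi.zero_apply]
    · refine .of_bound ((hφU.comp (measurable_fst.prodMk measurable_snd.fst)).mul
        (hg.comp (measurable_snd.snd.prodMk measurable_fst))).aestronglyMeasurable (Cφ * Cg)
        (.of_forall fun p ↦ ?_)
      rw [norm_mul, Real.norm_eq_abs, Real.norm_eq_abs]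
      exact mul_le_mul (hCφ _) (hCg _) (abs_nonneg _) ((abs_nonneg _).trans (hCφ 0))
  refine ⟨horth, condExp_comap_ae_eq_zero (hY.prodMk hZ) ?_ horth⟩
  simp_rw [hU]
  exact .of_bound (hφU.comp (hZ.prodMk hX)).aestronglyMeasurable Cφ (.of_forall fun ω ↦ hCφ _)

/-- if `X ⫫ Y | Z`, the conditional law of `X` given `Z = z` is a.e.
atomless, and `φ` is bounded measurable with `∫₀¹ φ = 0`, then for every bounded
measurable `g`, `E[φ(U₁)·g(Y, Z)] = 0`; equivalently `E[φ(U₁) | σ(Y, Z)] = 0` a.s.,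
where `U₁ = F_{X|Z}(X|Z)` is the nonparametric residual. -/
theorem residual_orthogonal_of_condIndep {Ω : Type*} [MeasurableSpace Ω]
    [StandardBorelSpace Ω] [Nonempty Ω]
    (μ : Measure Ω) [IsProbabilityMeasure μ] {d : ℕ}
    (X Y : Ω → ℝ) (Z : Ω → Fin d → ℝ)
    (hX : Measurable X) (hY : Measurable Y) (hZ : Measurable Z)
    (hatomless : ∀ᵐ z ∂(μ.map Z), ∀ x : ℝ, (condDistrib X Z μ) z {x} = 0)
    (hCI : CondIndepFun (MeasurableSpace.comap Z inferInstance) hZ.comap_le X Y μ)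
    (φ : ℝ → ℝ) (hφmeas : Measurable φ) (hφbdd : ∃ C : ℝ, ∀ u : ℝ, |φ u| ≤ C)
    (hφmean : ∫ u in Set.Icc (0 : ℝ) 1, φ u = 0) :
    (∀ g : ℝ × (Fin d → ℝ) → ℝ, Measurable g → (∃ C : ℝ, ∀ p, |g p| ≤ C) →
      ∫ ω, φ (((condDistrib X Z μ) (Z ω) (Set.Iic (X ω))).toReal) * g (Y ω, Z ω) ∂μ = 0) ∧
    μ[fun ω => φ (((condDistrib X Z μ) (Z ω) (Set.Iic (X ω))).toReal) |
        MeasurableSpace.comap (fun ω => (Y ω, Z ω)) inferInstance] =ᵐ[μ] 0 :=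
  residual_orthogonal_of_condIndep_general μ X Y Z hX hY hZ hatomless hCI φ hφmeas hφbdd hφmean
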